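/- If k : X × X → ℝ is a positive definite kernel on a type X, then the kernel exp ∘ k : X × X → ℝ defined by (exp ∘ k)(x, y) = exp(k(x, y)) is a positive definite kernel on X. -/

import Mathlib

/-- A positive definite kernel on a type `X`: symmetric and positive definite. -/
def IsPosDefKernel {X : Type*} (k : X × X → ℝ) : Prop :=
  (∀ x y : X, k (x, y) = k (y, x)) ∧
  ∀ (n : ℕ) (x : Fin n → X) (c : Fin n → ℝ),
    0 ≤ ∑ i, ∑ j, c i * c j * k (x i, x j)

/-!
Positive definiteness of a kernel is positive semidefiniteness of all its Gram matrices, so by the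
Schur product theorem it is preserved by products, hence by powers; it is also preserved by sums,
by nonnegative scalings and by pointwise limits. The exponential of `k` is the pointwise limit of
the partial sums `∑_{m < N} k ^ m / m!` of its Taylor series.
-/

open Filter Topology Matrix

def gramMatrix {X : Type*} {n : ℕ} (k : X × X → ℝ) (x : Fin n → X) : Matrix (Fin n) (Fin n) ℝ :=
  of fun i j ↦ k (x i, x j)

theorem star_dotProduct_gramMatrix_mulVec {X : Type*} {n : ℕ} (k : X × X → ℝ) (x : Fin n → X)
    (c : Fin n → ℝ) : star c ⬝ᵥ (gramMatrix k x *ᵥ c) = ∑ i, ∑ j, c i * c j * k (x i, x j) := by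
  simp only [gramMatrix, dotProduct, mulVec, of_apply, star_trivial, Finset.mul_sum]
  exact Finset.sum_congr rfl fun i _ ↦ Finset.sum_congr rfl fun j _ ↦ by ring

namespace IsPosDefKernel

variable {X : Type*} {k l : X × X → ℝ}

theorem iff_posSemidef_gramMatrix :
    IsPosDefKernel k ↔ ∀ (n : ℕ) (x : Fin n → X), (gramMatrix k x).PosSemidef := by
  simp only [posSemidef_iff_dotProduct_mulVec, star_dotProduct_gramMatrix_mulVec]
  constructor
  · rintro ⟨hsymm, hpos⟩ n x
    exact ⟨by ext i j; simp [gramMatrix, hsymm], hpos n x⟩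
  · intro h
    refine ⟨fun a b ↦ ?_, fun n x ↦ (h n x).2⟩
    simpa [gramMatrix] using congrFun₂ (h 2 ![a, b]).1 1 0

theorem mul (hk : IsPosDefKernel k) (hl : IsPosDefKernel l) : IsPosDefKernel (k * l) :=
  iff_posSemidef_gramMatrix.2 fun n x ↦
    (iff_posSemidef_gramMatrix.1 hk n x).hadamard (iff_posSemidef_gramMatrix.1 hl n x)

theorem one : IsPosDefKernel (1 : X × X → ℝ) := by
  refine ⟨fun _ _ ↦ rfl, fun n x c ↦ ?_⟩
  simpa [← Finset.sum_mul_sum, ← sq] using sq_nonneg (∑ i, c i)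

theorem pow (hk : IsPosDefKernel k) (m : ℕ) : IsPosDefKernel (k ^ m) := by
  induction m with
  | zero => simpa using one
  | succ m ih => simpa [pow_succ] using ih.mul hk

theorem add (hk : IsPosDefKernel k) (hl : IsPosDefKernel l) : IsPosDefKernel (k + l) := by
  refine ⟨fun x y ↦ by simp [hk.1 x y, hl.1 x y], fun n x c ↦ ?_⟩
  simpa [mul_add, Finset.sum_add_distrib] using add_nonneg (hk.2 n x c) (hl.2 n x c)

theorem smul (hk : IsPosDefKernel k) {a : ℝ} (ha : 0 ≤ a) : IsPosDefKernel (a • k) := by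
  refine ⟨fun x y ↦ by simp [hk.1 x y], fun n x c ↦ ?_⟩
  simpa [mul_left_comm _ a, ← Finset.mul_sum] using mul_nonneg ha (hk.2 n x c)

theorem zero : IsPosDefKernel (0 : X × X → ℝ) := ⟨fun _ _ ↦ rfl, fun _ _ _ ↦ by simp⟩

theorem sum {ι : Type*} (s : Finset ι) {K : ι → X × X → ℝ} (hK : ∀ i ∈ s, IsPosDefKernel (K i)) :
    IsPosDefKernel (∑ i ∈ s, K i) := by
  classical
  induction s using Finset.induction_on with
  | empty => simpa using zero
  | insert i s hi ih =>
    rw [Finset.sum_insert hi]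
    exact (hK i (s.mem_insert_self i)).add (ih fun j hj ↦ hK j (Finset.mem_insert_of_mem hj))

theorem of_tendsto {ι : Type*} {F : Filter ι} [F.NeBot] {K : ι → X × X → ℝ}
    (hK : ∀ i, IsPosDefKernel (K i)) (hlim : ∀ p, Tendsto (fun i ↦ K i p) F (𝓝 (k p))) :
    IsPosDefKernel k := by
  refine ⟨fun x y ↦ ?_, fun n x c ↦ ?_⟩
  · exact tendsto_nhds_unique (hlim (x, y)) <| by simpa [(hK _).1 x y] using hlim (y, x)
  · exact ge_of_tendsto (tendsto_finsetSum _ fun i _ ↦ tendsto_finsetSum _ fun j _ ↦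
      (hlim (x i, x j)).const_mul _) (Eventually.of_forall fun i ↦ (hK i).2 n x c)

end IsPosDefKernel

/-- The exponential of a positive definite kernel is a positive definite kernel. -/
theorem isPosDefKernel_exp {X : Type*} (k : X × X → ℝ) (h : IsPosDefKernel k) :
    IsPosDefKernel (fun p : X × X => Real.exp (k p)) := by
  refine IsPosDefKernel.of_tendsto (F := atTop)
    (K := fun N ↦ ∑ m ∈ Finset.range N, (m.factorial : ℝ)⁻¹ • k ^ m)
    (fun N ↦ IsPosDefKernel.sum _ fun m _ ↦ (h.pow m).smul (by positivity)) fun p ↦ ?_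
  simpa [Real.exp_eq_exp_ℝ, div_eq_inv_mul] using
    (NormedSpace.expSeries_div_hasSum_exp (k p)).tendsto_sum_nat
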